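/- arXiv:2207.10979 — 3 statements merged into one kernel-verified Lean document; each statement's English description precedes it below -/
import Mathlib

section
/- If a 2-cocycle α of D_{2n} satisfies α(x^{i-j}y, x^{i-j}y)·α(x^i y, x^{i-j}y) = α(x^{n-i}y, x^{n-i}y)·α(x^{j-i}y, x^{n-i}y) for all i, j ∈ {0,…,n−1} (exponents mod n), then for all a, b in the reversible subspace Γ_α one has a·b̂ = b·â in the twisted group algebra. -/
namespace Twisted

variable {n : ℕ} {F : Type*} [Field F]

def IsCocycle (α : DihedralGroup n → DihedralGroup n → F) : Prop :=
  (∀ g h, α g h ≠ 0) ∧ α 1 1 = 1 ∧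
    ∀ g h k, α g (h * k) * α h k = α (g * h) k * α g h

def tmul [NeZero n] (α : DihedralGroup n → DihedralGroup n → F)
    (a b : DihedralGroup n → F) : DihedralGroup n → F :=
  fun g => ∑ p : DihedralGroup n × DihedralGroup n,
    if p.1 * p.2 = g then α p.1 p.2 * a p.1 * b p.2 else 0

def inCn (a : DihedralGroup n → F) : Prop := ∀ i : ZMod n, a (.sr i) = 0

def inCny (a : DihedralGroup n → F) : Prop := ∀ i : ZMod n, a (.r i) = 0

def inGamma (a : DihedralGroup n → F) : Prop :=
  inCny a ∧ ∀ i : ZMod n, a (.sr i) = a (.sr (-i))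

def adj (α : DihedralGroup n → DihedralGroup n → F) (a : DihedralGroup n → F) :
    DihedralGroup n → F :=
  fun g => α g⁻¹ g * a g⁻¹

def alphaLam (l : F) : DihedralGroup n → DihedralGroup n → F
  | .sr _, .sr _ => l
  | _, _ => 1

def ofCoeffs (a b : ZMod n → F) : DihedralGroup n → F
  | .r i => a i
  | .sr i => b i

end Twisted

open Twisted

def dgEquiv {n : ℕ} : (ZMod n) ⊕ (ZMod n) ≃ DihedralGroup n where
  toFun := Sum.elim DihedralGroup.r DihedralGroup.sr
  invFun := fun g => match g with | .r i => .inl i | .sr i => .inr i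
  left_inv := by rintro (i|i) <;> rfl
  right_inv := by rintro (i|i) <;> rfl

lemma tmul_eq {n : ℕ} [NeZero n] {F : Type*} [Field F]
    (α : DihedralGroup n → DihedralGroup n → F) (a c : DihedralGroup n → F)
    (g : DihedralGroup n) :
    tmul α a c g = ∑ h : DihedralGroup n, α h (h⁻¹ * g) * a h * c (h⁻¹ * g) := by
  rw [tmul, Fintype.sum_prod_type]
  refine Finset.sum_congr rfl fun h _ => ?_
  rw [Finset.sum_eq_single (h⁻¹ * g)]
  · simp
  · intro b _ hb
    rw [if_neg]
    intro he; exact hb (by rw [← he]; group)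
  · simp

lemma srinv {n : ℕ} (i : ZMod n) : (DihedralGroup.sr i)⁻¹ = DihedralGroup.sr i := rfl
lemma rinv {n : ℕ} (i : ZMod n) : (DihedralGroup.r i)⁻¹ = DihedralGroup.r (-i) := rfl

/-- if α satisfies
α(x^{i-j}y, x^{i-j}y)·α(x^i y, x^{i-j}y) = α(x^{n-i}y, x^{n-i}y)·α(x^{j-i}y, x^{n-i}y)
for all i, j, then a·b̂ = b·â for all a, b in the reversible subspace Γ_α. -/
theorem stmt_6 {n : ℕ} [NeZero n] {F : Type*} [Field F] [Fintype F]
    (α : DihedralGroup n → DihedralGroup n → F) (hα : IsCocycle α)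
    (hcond : ∀ i j : ZMod n,
      α (.sr (i - j)) (.sr (i - j)) * α (.sr i) (.sr (i - j)) =
        α (.sr (-i)) (.sr (-i)) * α (.sr (j - i)) (.sr (-i)))
    (a b : DihedralGroup n → F) (ha : inGamma a) (hb : inGamma b) :
    tmul α a (adj α b) = tmul α b (adj α a) := by
  obtain ⟨ha1, ha2⟩ := ha
  obtain ⟨hb1, hb2⟩ := hb
  replace ha1 : ∀ i : ZMod n, a (.r i) = 0 := ha1
  replace hb1 : ∀ i : ZMod n, b (.r i) = 0 := hb1
  funext g
  rw [tmul_eq, tmul_eq]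
  rw [← Equiv.sum_comp (dgEquiv (n := n)), ← Equiv.sum_comp (dgEquiv (n := n)),
    Fintype.sum_sum_type, Fintype.sum_sum_type]
  simp only [dgEquiv, Equiv.coe_fn_mk, Sum.elim_inl, Sum.elim_inr, ha1, hb1,
    mul_zero, zero_mul, Finset.sum_const_zero, zero_add]
  cases g with
  | sr k =>
    simp only [srinv, DihedralGroup.sr_mul_sr, adj, rinv, hb1, ha1, mul_zero,
      zero_mul, Finset.sum_const_zero]
  | r k =>
    simp only [srinv, DihedralGroup.sr_mul_r, adj]
    refine Fintype.sum_equiv ((Equiv.addRight k).trans (Equiv.neg _)) _ _ fun i => ?_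
    simp only [Equiv.trans_apply, Equiv.coe_addRight, Equiv.neg_apply, srinv]
    have h1 : (-(i + k) + k : ZMod n) = -i := by ring
    rw [h1]
    have key := hcond i (-k)
    rw [sub_neg_eq_add] at key
    have h2 : (-k - i : ZMod n) = -(i + k) := by ring
    rw [h2] at key
    rw [ha2 i, hb2 (i + k)]
    linear_combination (a (.sr (-i)) * b (.sr (-(i + k)))) * key
end

section
/- The key exchange is correct: with α = α_λ, public h ∈ F_q^α D_{2n}, Alice's secret (s₁, t₁) and Bob's secret (s₂, t₂) in F_q^α C_n × Γ_α, the two computed keys agree: s₁(s₂ h t₂)t̂₁ = s₂(s₁ h t₁)t̂₂. -/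
open Twisted

section Aux
open DihedralGroup

variable {n : ℕ} [NeZero n] {F : Type*} [Field F]

private lemma tmul_apply (α : DihedralGroup n → DihedralGroup n → F)
    (a b : DihedralGroup n → F) (g : DihedralGroup n) :
    tmul α a b g = ∑ x : DihedralGroup n, α x (x⁻¹ * g) * a x * b (x⁻¹ * g) := by
  rw [tmul, Fintype.sum_prod_type]
  refine Finset.sum_congr rfl fun x _ => ?_
  rw [Fintype.sum_eq_single (x⁻¹ * g)
    (fun y hy => if_neg (fun hxy => hy (by rw [← hxy, inv_mul_cancel_left]))),
    if_pos (mul_inv_cancel_left x g)]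

@[simp] private lemma r_inv' (i : ZMod n) : (r i : DihedralGroup n)⁻¹ = r (-i) := rfl
@[simp] private lemma sr_inv' (i : ZMod n) : (sr i : DihedralGroup n)⁻¹ = sr i := rfl

private lemma alphaLam_cocycle (l : F) (g h k : DihedralGroup n) :
    alphaLam l g (h * k) * alphaLam l h k = alphaLam l (g * h) k * alphaLam l g h := by
  rcases g with i | i <;> rcases h with j | j <;> rcases k with m | m <;> simp [alphaLam]

private lemma tmul_assoc (l : F) (a b c : DihedralGroup n → F) :
    tmul (alphaLam l) (tmul (alphaLam l) a b) c
      = tmul (alphaLam l) a (tmul (alphaLam l) b c) := by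
  funext g
  simp only [tmul_apply, Finset.mul_sum, Finset.sum_mul]
  rw [Finset.sum_comm]
  refine Finset.sum_congr rfl fun u _ => ?_
  refine Fintype.sum_equiv (Equiv.mulLeft u).symm _ _ fun x => ?_
  simp only [Equiv.symm_apply_apply, Equiv.coe_mulLeft, Equiv.mulLeft_symm]
  have h1 : (u⁻¹ * x)⁻¹ * (u⁻¹ * g) = x⁻¹ * g := by group
  have h2 := alphaLam_cocycle l u (u⁻¹ * x) (x⁻¹ * g)
  have h3 : (u⁻¹ * x) * (x⁻¹ * g) = u⁻¹ * g := by group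
  rw [h3, mul_inv_cancel_left] at h2
  rw [h1]
  linear_combination (a u * b (u⁻¹ * x) * c (x⁻¹ * g)) * h2.symm

private lemma tmul_comm_Cn (l : F) {a b : DihedralGroup n → F} (ha : inCn a) (hb : inCn b) :
    tmul (alphaLam l) a b = tmul (alphaLam l) b a := by
  funext g
  rw [tmul_apply, tmul_apply]
  have ha' : ∀ i : ZMod n, a (sr i) = 0 := ha
  have hb' : ∀ i : ZMod n, b (sr i) = 0 := hb
  refine Fintype.sum_equiv ((Equiv.inv (DihedralGroup n)).trans (Equiv.mulRight g)) _ _ fun x => ?_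
  simp only [Equiv.trans_apply, Equiv.inv_apply, Equiv.coe_mulRight]
  rcases x with i | i <;> rcases g with k | k <;>
    simp [alphaLam, ha', hb'] <;> ring_nf

private lemma gamma_comm (l : F) {t₁ t₂ : DihedralGroup n → F}
    (h₁ : inGamma t₁) (h₂ : inGamma t₂) :
    tmul (alphaLam l) t₂ (adj (alphaLam l) t₁)
      = tmul (alphaLam l) t₁ (adj (alphaLam l) t₂) := by
  funext g
  rw [tmul_apply, tmul_apply]
  have h₁z : ∀ i : ZMod n, t₁ (r i) = 0 := h₁.1
  have h₂z : ∀ i : ZMod n, t₂ (r i) = 0 := h₂.1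
  refine Fintype.sum_equiv ((Equiv.mulLeft (DihedralGroup.sr 0)).trans
    ((Equiv.mulRight (DihedralGroup.sr 0)).trans (Equiv.mulRight g⁻¹))) _ _ fun x => ?_
  simp only [Equiv.trans_apply, Equiv.coe_mulLeft, Equiv.coe_mulRight]
  rcases x with i | i <;> rcases g with k | k <;>
    simp [alphaLam, adj, h₁z, h₂z] <;> ring_nf
  · rw [show (-i - k : ZMod n) = -(i + k) by ring, ← h₁.2, ← h₂.2]
    ring

end Aux


/-- correctness of the key exchange: Alice's key
s₁ (s₂ h t₂) t̂₁ equals Bob's key s₂ (s₁ h t₁) t̂₂. -/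
theorem stmt_9 {n : ℕ} [NeZero n] {F : Type*} [Field F] [Fintype F] (l : F) (hl : l ≠ 0)
    (h s₁ s₂ t₁ t₂ : DihedralGroup n → F)
    (hs₁ : inCn s₁) (hs₂ : inCn s₂) (ht₁ : inGamma t₁) (ht₂ : inGamma t₂) :
    tmul (alphaLam l) s₁
        (tmul (alphaLam l) (tmul (alphaLam l) (tmul (alphaLam l) s₂ h) t₂)
          (adj (alphaLam l) t₁)) =
      tmul (alphaLam l) s₂
        (tmul (alphaLam l) (tmul (alphaLam l) (tmul (alphaLam l) s₁ h) t₁)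
          (adj (alphaLam l) t₂)) := by
  rw [tmul_assoc l (tmul (alphaLam l) s₂ h) t₂ (adj (alphaLam l) t₁),
      ← tmul_assoc l s₁ (tmul (alphaLam l) s₂ h) (tmul (alphaLam l) t₂ (adj (alphaLam l) t₁)),
      ← tmul_assoc l s₁ s₂ h,
      tmul_assoc l (tmul (alphaLam l) s₁ h) t₁ (adj (alphaLam l) t₂),
      ← tmul_assoc l s₂ (tmul (alphaLam l) s₁ h) (tmul (alphaLam l) t₁ (adj (alphaLam l) t₂)),
      ← tmul_assoc l s₂ s₁ h,
      tmul_comm_Cn l hs₁ hs₂, gamma_comm l ht₁ ht₂]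
end

section
/- The operation ψ(t) ⋆ ψ(t') := ψ(t t̂') makes ψ(Γ_α) into a commutative semigroup, i.e., t t̂' = t' t̂ for t, t' ∈ Γ_α, the product t t̂' lies in F_q^α C_n, and the operation is associative on ψ(Γ_α). -/
open Twisted

namespace Twisted

/-- The F_q-linear isomorphism ψ : F_q^α C_n y → F_q^α C_n, Σ a_i x^i y ↦ Σ a_i x^i. -/
def psi {n : ℕ} {F : Type*} [Field F] (a : DihedralGroup n → F) : DihedralGroup n → F
  | .r i => a (.sr i)
  | .sr _ => 0

/-- The inverse of ψ, Σ a_i x^i ↦ Σ a_i x^i y. -/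
def invpsi {n : ℕ} {F : Type*} [Field F] (a : DihedralGroup n → F) : DihedralGroup n → F
  | .r _ => 0
  | .sr i => a (.r i)

/-- The operation ⋆ on ψ(Γ_α): ψ(t) ⋆ ψ(t') := t·t̂'. -/
def star {n : ℕ} [NeZero n] {F : Type*} [Field F]
    (α : DihedralGroup n → DihedralGroup n → F) (u v : DihedralGroup n → F) :
    DihedralGroup n → F :=
  tmul α (invpsi u) (adj α (invpsi v))

end Twisted

namespace Twisted
variable {n : ℕ} {F : Type*} [Field F]

def dihEquiv (n : ℕ) : (ZMod n) ⊕ (ZMod n) ≃ DihedralGroup n where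
  toFun i := match i with
    | Sum.inl j => DihedralGroup.r j
    | Sum.inr j => DihedralGroup.sr j
  invFun i := match i with
    | DihedralGroup.r j => Sum.inl j
    | DihedralGroup.sr j => Sum.inr j
  left_inv := by rintro (x | x) <;> rfl
  right_inv := by rintro (x | x) <;> rfl

lemma sum_dihedral [NeZero n] (f : DihedralGroup n → F) :
    ∑ g, f g = (∑ i : ZMod n, f (.r i)) + ∑ i : ZMod n, f (.sr i) := by
  rw [← Equiv.sum_comp (dihEquiv n) f, Fintype.sum_sum_type]
  rfl

@[simp] lemma alphaLam_sr_sr (l : F) (i j : ZMod n) :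
    alphaLam l (.sr i) (.sr j) = l := rfl
@[simp] lemma alphaLam_sr_r (l : F) (i j : ZMod n) :
    alphaLam l (.sr i) (.r j) = 1 := rfl
@[simp] lemma alphaLam_r (l : F) (i : ZMod n) (g : DihedralGroup n) :
    alphaLam l (.r i) g = 1 := by cases g <;> rfl

@[simp] lemma adj_r (l : F) (a : DihedralGroup n → F) (j : ZMod n) :
    adj (alphaLam l) a (.r j) = a (.r (-j)) := by
  show alphaLam l (DihedralGroup.r j)⁻¹ (.r j) * a (DihedralGroup.r j)⁻¹ = _
  have h : (DihedralGroup.r j)⁻¹ = (DihedralGroup.r (-j) : DihedralGroup n) := rfl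
  rw [h, alphaLam_r, one_mul]
@[simp] lemma adj_sr (l : F) (a : DihedralGroup n → F) (j : ZMod n) :
    adj (alphaLam l) a (.sr j) = l * a (.sr j) := by
  show alphaLam l (DihedralGroup.sr j)⁻¹ (.sr j) * a (DihedralGroup.sr j)⁻¹ = _
  have h : (DihedralGroup.sr j)⁻¹ = (DihedralGroup.sr j : DihedralGroup n) := rfl
  rw [h, alphaLam_sr_sr]

def key [NeZero n] (l : F) (t t' : DihedralGroup n → F) : DihedralGroup n → F
  | .r k => ∑ i : ZMod n, l * t (.sr i) * (l * t' (.sr (k + i)))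
  | .sr _ => 0

lemma tmul_adj [NeZero n] (l : F) (t t' : DihedralGroup n → F)
    (ht : inCny t) (ht' : inCny t') :
    tmul (alphaLam l) t (adj (alphaLam l) t') = key l t t' := by
  funext g
  show (∑ p : DihedralGroup n × DihedralGroup n,
    if p.1 * p.2 = g then alphaLam l p.1 p.2 * t p.1 * adj (alphaLam l) t' p.2 else 0) = _
  have ht0 : ∀ i : ZMod n, t (.r i) = 0 := ht
  have ht0' : ∀ i : ZMod n, t' (.r i) = 0 := ht'
  rw [Fintype.sum_prod_type, sum_dihedral]
  simp only [ht0, mul_zero, zero_mul, ite_self, Finset.sum_const_zero, zero_add]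
  simp only [sum_dihedral]
  simp only [adj_r, adj_sr, ht0', mul_zero, ite_self, Finset.sum_const_zero, zero_add,
    DihedralGroup.sr_mul_sr, alphaLam_sr_sr]
  cases g with
  | r k =>
    show _ = ∑ i : ZMod n, l * t (.sr i) * (l * t' (.sr (k + i)))
    refine Finset.sum_congr rfl fun i _ => ?_
    simp only [DihedralGroup.r.injEq, sub_eq_iff_eq_add]
    rw [Finset.sum_ite_eq' Finset.univ (k + i)
      (fun j => l * t (.sr i) * (l * t' (.sr j)))]
    simp
  | sr k => simp; rfl

lemma key_comm [NeZero n] (l : F) (t t' : DihedralGroup n → F)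
    (ht : ∀ i : ZMod n, t (.sr i) = t (.sr (-i)))
    (ht' : ∀ i : ZMod n, t' (.sr i) = t' (.sr (-i))) :
    key l t t' = key l t' t := by
  funext g
  cases g with
  | sr k => rfl
  | r k =>
    show (∑ i : ZMod n, l * t (.sr i) * (l * t' (.sr (k + i)))) =
      ∑ i : ZMod n, l * t' (.sr i) * (l * t (.sr (k + i)))
    refine Fintype.sum_equiv ((Equiv.addLeft k).trans (Equiv.neg _)) _ _ fun i => ?_
    simp only [Equiv.trans_apply, Equiv.coe_addLeft, Equiv.neg_apply]
    rw [show k + -(k + i) = -i from by ring, ← ht i, ← ht' (k + i)]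
    ring

end Twisted
namespace Twisted
variable {n : ℕ} {F : Type*} [Field F]

lemma invpsi_psi (t : DihedralGroup n → F) (ht : inCny t) : invpsi (psi t) = t := by
  funext g
  cases g with
  | r i => exact (ht i).symm
  | sr i => rfl

lemma star_eq_key [NeZero n] (l : F) (u v : DihedralGroup n → F) :
    star (alphaLam l) u v = key l (invpsi u) (invpsi v) :=
  tmul_adj l _ _ (fun _ => rfl) (fun _ => rfl)

lemma key_assoc [NeZero n] (l : F) (t t' t'' : DihedralGroup n → F)
    (ht : ∀ i : ZMod n, t (.sr i) = t (.sr (-i))) :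
    key l (invpsi (key l t t')) t'' = key l t (invpsi (key l t' t'')) := by
  funext g
  cases g with
  | sr k => rfl
  | r k =>
    show (∑ i : ZMod n, l * (∑ j : ZMod n, l * t (.sr j) * (l * t' (.sr (i + j)))) *
        (l * t'' (.sr (k + i)))) =
      ∑ i : ZMod n, l * t (.sr i) *
        (l * ∑ j : ZMod n, l * t' (.sr j) * (l * t'' (.sr (k + i + j))))
    simp only [Finset.mul_sum, Finset.sum_mul]
    rw [Finset.sum_comm]
    refine Fintype.sum_equiv (Equiv.neg (ZMod n)) _ _ fun j => ?_
    refine Fintype.sum_equiv (Equiv.addRight j) _ _ fun i => ?_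
    simp only [Equiv.neg_apply, Equiv.coe_addRight]
    rw [show k + -j + (i + j) = k + i from by ring, ← ht j]
    ring

end Twisted

/-- the operation ψ(t) ⋆ ψ(t') := t t̂' makes ψ(Γ_α) a commutative
semigroup: t t̂' = t' t̂ for t, t' ∈ Γ_α, the product t t̂' lies in F_q^α C_n, and
⋆ is associative on ψ(Γ_α). -/
theorem stmt_10 {n : ℕ} [NeZero n] {F : Type*} [Field F] [Fintype F] (l : F) (hl : l ≠ 0) :
    (∀ t t' : DihedralGroup n → F, inGamma t → inGamma t' →
      tmul (alphaLam l) t (adj (alphaLam l) t') = tmul (alphaLam l) t' (adj (alphaLam l) t)) ∧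
    (∀ t t' : DihedralGroup n → F, inGamma t → inGamma t' →
      inCn (tmul (alphaLam l) t (adj (alphaLam l) t'))) ∧
    (∀ t t' t'' : DihedralGroup n → F, inGamma t → inGamma t' → inGamma t'' →
      star (alphaLam l) (star (alphaLam l) (psi t) (psi t')) (psi t'') =
        star (alphaLam l) (psi t) (star (alphaLam l) (psi t') (psi t''))) := by
  refine ⟨?_, ?_, ?_⟩
  · intro t t' ht ht'
    rw [tmul_adj l t t' ht.1 ht'.1, tmul_adj l t' t ht'.1 ht.1]
    exact key_comm l t t' ht.2 ht'.2
  · intro t t' ht ht'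
    rw [tmul_adj l t t' ht.1 ht'.1]
    intro i
    rfl
  · intro t t' t'' ht ht' ht''
    simp only [star_eq_key, invpsi_psi t ht.1, invpsi_psi t' ht'.1, invpsi_psi t'' ht''.1]
    exact key_assoc l t t' t'' ht.2
end
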